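/- Let n ∈ ℝ^N be a unit vector, η ∈ (0,1), and let G : ℝ^N → [0,∞) be measurable such that G and h(G−1) are integrable against (v·n)₊ M(v) dv and Λ_n(G) > 0. Then Λ_n(G) · ∫_{ℝ^N} 1_{ |G(v)/Λ_n(G) − 1| > η } · min( (v·n)₊², 1 ) M(v) dv ≤ (1/(√(2π) h(η))) ( Λ_n(h(G−1)) − h(Λ_n(G) − 1) ). -/

import Mathlib

open MeasureTheory Real Set
open scoped RealInnerProductSpace

/-- The standard Gaussian density `M(v) = (2π)^{−N/2} exp(−|v|²/2)` on `ℝ^N`. -/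
noncomputable def gaussM {N : ℕ} (v : EuclideanSpace ℝ (Fin N)) : ℝ :=
  (2 * π) ^ (-(N : ℝ) / 2) * Real.exp (-‖v‖ ^ 2 / 2)

/-- The relative-entropy integrand `h(z) = (1+z)·log(1+z) − z`
(with the convention `h(−1) = 1`, which holds here since `Real.log 0 = 0`). -/
noncomputable def entH (z : ℝ) : ℝ := (1 + z) * Real.log (1 + z) - z

/-- The boundary average `Λ_n(φ) = √(2π) ∫ φ(v)(v·n)₊ M(v) dv`. -/
noncomputable def Lam {N : ℕ} (n : EuclideanSpace ℝ (Fin N))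
    (φ : EuclideanSpace ℝ (Fin N) → ℝ) : ℝ :=
  Real.sqrt (2 * π) * ∫ v, φ v * max ⟪v, n⟫ 0 * gaussM v

open ProbabilityTheory

/-! Write `λ = Λ_n(G)`. Since `v·n` is a standard normal variable under `M`, the flux
`∫ (v·n)₊ M` equals `1/√(2π)`, i.e. `Λ_n(1) = 1`; with the identity
`λ h(G/λ − 1) = h(G − 1) − G log λ + λ − 1` this gives
`Λ_n(λ h(G/λ − 1)) = Λ_n(h(G − 1)) − h(λ − 1)`. The claim follows by integrating the
Chebyshev-type bound `1_{|z| > η} min(p², 1) ≤ p h(z)/h(η)` (for `z ≥ −1`, `p ≥ 0`), which holds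
because `h` decreases on `[−1, 0]`, increases on `[0, ∞)`, and `h(−η) ≥ h(η)` for `η ≤ 1`. -/

lemma entH_zero : entH 0 = 0 := by simp [entH]

lemma entH_sub_one (x : ℝ) : entH (x - 1) = x * log x - x + 1 := by
  simp only [entH, add_sub_cancel]; ring

@[fun_prop]
lemma continuous_entH : Continuous entH := by
  unfold entH; fun_prop

lemma hasDerivAt_entH {z : ℝ} (hz : -1 < z) : HasDerivAt entH (log (1 + z)) z := by
  have h1 : 1 + z ≠ 0 := by linarith
  have h := (((hasDerivAt_id z).const_add 1).mul (((hasDerivAt_id z).const_add 1).log h1)).sub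
    (hasDerivAt_id z)
  refine h.congr_deriv ?_
  simp only [id, one_mul, mul_one_div_cancel h1]
  ring

lemma strictMonoOn_entH : StrictMonoOn entH (Ici 0) := by
  refine strictMonoOn_of_deriv_pos (convex_Ici 0) continuous_entH.continuousOn fun x hx => ?_
  rw [interior_Ici, mem_Ioi] at hx
  rw [(hasDerivAt_entH (by linarith)).deriv]
  exact log_pos (by linarith)

lemma antitoneOn_entH : AntitoneOn entH (Icc (-1) 0) := by
  refine antitoneOn_of_deriv_nonpos (convex_Icc _ _) continuous_entH.continuousOn
    (fun x hx => ?_) fun x hx => ?_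
  all_goals rw [interior_Icc] at hx
  · exact (hasDerivAt_entH hx.1).differentiableAt.differentiableWithinAt
  · rw [(hasDerivAt_entH hx.1).deriv]
    exact log_nonpos (by linarith [hx.1]) (by linarith [hx.2])

lemma entH_pos {z : ℝ} (hz : 0 < z) : 0 < entH z :=
  entH_zero ▸ strictMonoOn_entH self_mem_Ici hz.le hz

lemma entH_nonneg {z : ℝ} (hz : -1 ≤ z) : 0 ≤ entH z := by
  rcases le_total 0 z with h | h
  · exact entH_zero ▸ strictMonoOn_entH.monotoneOn self_mem_Ici h h
  · exact entH_zero ▸ antitoneOn_entH ⟨hz, h⟩ ⟨by norm_num, le_rfl⟩ h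

lemma entH_le_entH_neg {t : ℝ} (ht0 : 0 ≤ t) (ht1 : t ≤ 1) : entH t ≤ entH (-t) := by
  have hderiv : ∀ s ∈ Ioo (0 : ℝ) 1,
      HasDerivAt (fun s => entH (-s) - entH s) (-log ((1 - s) * (1 + s))) s := by
    intro s hs
    have h := ((hasDerivAt_entH (by linarith [hs.2] : -1 < -s)).comp s (hasDerivAt_neg s)).sub
      (hasDerivAt_entH (by linarith [hs.1] : -1 < s))
    refine h.congr_deriv ?_
    rw [log_mul (by linarith [hs.2]) (by linarith [hs.1])]
    ring_nf
  have hmono : MonotoneOn (fun s => entH (-s) - entH s) (Icc 0 1) := by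
    refine monotoneOn_of_deriv_nonneg (convex_Icc _ _)
      (by fun_prop) (fun s hs => ?_) fun s hs => ?_
    all_goals rw [interior_Icc] at hs
    · exact (hderiv s hs).differentiableAt.differentiableWithinAt
    · rw [(hderiv s hs).deriv, neg_nonneg]
      exact log_nonpos (by nlinarith [hs.1, hs.2]) (by nlinarith [hs.1])
  have := hmono ⟨le_rfl, zero_le_one⟩ ⟨ht0, ht1⟩ ht0
  simp only [neg_zero, sub_self] at this
  linarith

lemma entH_le_of_le_abs {η z : ℝ} (hη0 : 0 ≤ η) (hη1 : η ≤ 1) (hz : -1 ≤ z) (h : η ≤ |z|) :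
    entH η ≤ entH z := by
  rcases le_total 0 z with hz0 | hz0
  · rw [abs_of_nonneg hz0] at h
    exact strictMonoOn_entH.monotoneOn hη0 hz0 h
  · rw [abs_of_nonpos hz0] at h
    calc entH η ≤ entH (-η) := entH_le_entH_neg hη0 hη1
      _ ≤ entH z := antitoneOn_entH ⟨hz, hz0⟩ ⟨by linarith, by linarith⟩ (by linarith)

lemma mul_entH_div_sub_one {c : ℝ} (hc : c ≠ 0) (g : ℝ) :
    c * entH (g / c - 1) = entH (g - 1) - log c * g + (c - 1) := by
  rcases eq_or_ne g 0 with rfl | hg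
  · simp [entH]
  · rw [entH_sub_one, entH_sub_one, log_div hg hc]
    field_simp
    ring

lemma integral_Ioi_mul_exp_neg_mul_sq {b : ℝ} (hb : 0 < b) :
    ∫ r in Ioi 0, r * exp (-b * r ^ 2) = (2 * b)⁻¹ := by
  have h := integral_mul_cexp_neg_mul_sq (b := (b : ℂ)) (by simpa using hb)
  rw [← Complex.ofReal_inj, ← integral_complex_ofReal]
  push_cast
  exact h

lemma gaussianPDFReal_zero_one (t : ℝ) :
    gaussianPDFReal 0 1 t = (√(2 * π))⁻¹ * exp (-(1 / 2) * t ^ 2) := by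
  simp only [gaussianPDFReal, NNReal.coe_one, mul_one, sub_zero]
  ring_nf

lemma max_mul_eq_indicator (f : ℝ → ℝ) :
    (fun t => max t 0 * f t) = (Ioi 0).indicator fun t => t * f t := by
  ext t
  rcases lt_or_ge 0 t with h | h
  · simp [h, h.le]
  · simp [h, not_lt.2 h]

lemma integrable_max_mul_gaussianPDFReal :
    Integrable fun t => max t 0 * gaussianPDFReal 0 1 t := by
  rw [max_mul_eq_indicator]
  refine Integrable.indicator ?_ measurableSet_Ioi
  simp only [gaussianPDFReal_zero_one, mul_left_comm _ (√(2 * π))⁻¹]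
  exact (integrable_mul_exp_neg_mul_sq (by norm_num)).const_mul _

lemma integral_max_mul_gaussianPDFReal :
    ∫ t, max t 0 * gaussianPDFReal 0 1 t = (√(2 * π))⁻¹ := by
  rw [max_mul_eq_indicator, integral_indicator measurableSet_Ioi]
  simp only [gaussianPDFReal_zero_one, mul_left_comm _ (√(2 * π))⁻¹, integral_const_mul,
    integral_Ioi_mul_exp_neg_mul_sq (by norm_num : (0 : ℝ) < 1 / 2)]
  norm_num

section Gaussian

variable {N : ℕ}

lemma gaussM_nonneg (v : EuclideanSpace ℝ (Fin N)) : 0 ≤ gaussM v := by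
  unfold gaussM
  positivity

lemma gaussM_eq_prod (v : EuclideanSpace ℝ (Fin N)) :
    gaussM v = ∏ i, gaussianPDFReal 0 1 (v i) := by
  simp only [gaussM, gaussianPDFReal_zero_one, Finset.prod_mul_distrib, Finset.prod_const,
    Finset.card_univ, Fintype.card_fin, ← exp_sum, EuclideanSpace.norm_sq_eq, Real.norm_eq_abs,
    sq_abs, ← Finset.mul_sum]
  congr 1
  · rw [sqrt_eq_rpow, ← rpow_neg (by positivity), ← rpow_natCast, ← rpow_mul (by positivity)]
    ring_nf
  · ring_nf

lemma gaussM_linearIsometryEquiv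
    (L : EuclideanSpace ℝ (Fin N) ≃ₗᵢ[ℝ] EuclideanSpace ℝ (Fin N)) (v : EuclideanSpace ℝ (Fin N)) :
    gaussM (L v) = gaussM v := by
  simp [gaussM]

lemma comp_apply_mul_gaussM_eq_prod (i : Fin N) (f : ℝ → ℝ) (y : Fin N → ℝ) :
    f (y i) * gaussM (WithLp.toLp 2 y) =
      ∏ j, (if j = i then f (y j) else 1) * gaussianPDFReal 0 1 (y j) := by
  rw [Finset.prod_mul_distrib, Finset.prod_ite_eq' Finset.univ i, if_pos (Finset.mem_univ i),
    gaussM_eq_prod]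

lemma integrable_comp_apply_mul_gaussM (i : Fin N) {f : ℝ → ℝ}
    (hf : Integrable fun t => f t * gaussianPDFReal 0 1 t) :
    Integrable fun w : EuclideanSpace ℝ (Fin N) => f (w i) * gaussM w := by
  have hprod : Integrable fun y : Fin N → ℝ =>
      ∏ j, (if j = i then f (y j) else 1) * gaussianPDFReal 0 1 (y j) := by
    refine Integrable.fintype_prod (μ := fun _ => (volume : Measure ℝ))
      (f := fun j (t : ℝ) => (if j = i then f t else 1) * gaussianPDFReal 0 1 t) fun j => ?_
    split_ifs
    · exact hf
    · simpa using integrable_gaussianPDFReal 0 1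
  simp_rw [← comp_apply_mul_gaussM_eq_prod] at hprod
  exact ((PiLp.volume_preserving_ofLp (Fin N)).integrable_comp_emb
    (MeasurableEquiv.toLp 2 (Fin N → ℝ)).symm.measurableEmbedding).2 hprod

lemma integral_comp_apply_mul_gaussM (i : Fin N) (f : ℝ → ℝ) :
    ∫ w : EuclideanSpace ℝ (Fin N), f (w i) * gaussM w = ∫ t, f t * gaussianPDFReal 0 1 t := by
  rw [← (PiLp.volume_preserving_toLp (Fin N)).integral_comp
      (MeasurableEquiv.toLp 2 (Fin N → ℝ)).measurableEmbedding]
  simp_rw [comp_apply_mul_gaussM_eq_prod i f]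
  rw [integral_fintype_prod_volume_eq_prod
    fun j (t : ℝ) => (if j = i then f t else 1) * gaussianPDFReal 0 1 t, Finset.prod_eq_single i]
  · simp
  · intro j _ hj
    simp [hj, integral_gaussianPDFReal_eq_one]
  · simp

lemma exists_orthonormalBasis_apply_eq {𝕜 E ι : Type*} [RCLike 𝕜] [NormedAddCommGroup E]
    [InnerProductSpace 𝕜 E] [FiniteDimensional 𝕜 E] [Fintype ι]
    (h : Module.finrank 𝕜 E = Fintype.card ι) {n : E} (hn : ‖n‖ = 1) (i : ι) :
    ∃ b : OrthonormalBasis ι 𝕜 E, b i = n := by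
  obtain ⟨b, hb⟩ := Orthonormal.exists_orthonormalBasis_extension_of_card_eq h
    (v := fun _ => n) (s := {i}) (by simp [hn])
  exact ⟨b, hb i rfl⟩

lemma exists_linearIsometryEquiv_comp_inner_mul_gaussM {n : EuclideanSpace ℝ (Fin N)}
    (hn : ‖n‖ = 1) :
    ∃ (i : Fin N) (L : EuclideanSpace ℝ (Fin N) ≃ₗᵢ[ℝ] EuclideanSpace ℝ (Fin N)),
      ∀ f : ℝ → ℝ, (fun v => f ⟪v, n⟫ * gaussM v) = (fun w => f (w i) * gaussM w) ∘ L := by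
  obtain ⟨i⟩ : Nonempty (Fin N) := by
    by_contra h
    rw [not_nonempty_iff] at h
    simp [Subsingleton.elim n 0] at hn
  obtain ⟨b, hb⟩ := exists_orthonormalBasis_apply_eq (𝕜 := ℝ) (by simp) hn i
  refine ⟨i, b.repr, fun f => funext fun v => ?_⟩
  simp [b.repr_apply_apply, hb, real_inner_comm, gaussM_linearIsometryEquiv]

lemma integrable_comp_inner_mul_gaussM {n : EuclideanSpace ℝ (Fin N)} (hn : ‖n‖ = 1)
    {f : ℝ → ℝ} (hf : Integrable fun t => f t * gaussianPDFReal 0 1 t) :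
    Integrable fun v => f ⟪v, n⟫ * gaussM v := by
  obtain ⟨i, L, hL⟩ := exists_linearIsometryEquiv_comp_inner_mul_gaussM hn
  rw [hL]
  exact (L.measurePreserving.integrable_comp_emb L.toHomeomorph.measurableEmbedding).2
    (integrable_comp_apply_mul_gaussM i hf)

lemma integral_comp_inner_mul_gaussM {n : EuclideanSpace ℝ (Fin N)} (hn : ‖n‖ = 1)
    (f : ℝ → ℝ) : ∫ v, f ⟪v, n⟫ * gaussM v = ∫ t, f t * gaussianPDFReal 0 1 t := by
  obtain ⟨i, L, hL⟩ := exists_linearIsometryEquiv_comp_inner_mul_gaussM hn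
  rw [hL]
  exact (L.measurePreserving.integral_comp L.toHomeomorph.measurableEmbedding _).trans
    (integral_comp_apply_mul_gaussM i f)

end Gaussian

section Lam

variable {N : ℕ}

def FluxIntegrable (n : EuclideanSpace ℝ (Fin N)) (f : EuclideanSpace ℝ (Fin N) → ℝ) : Prop :=
  Integrable fun v => f v * max ⟪v, n⟫ 0 * gaussM v

variable {n : EuclideanSpace ℝ (Fin N)} {f g : EuclideanSpace ℝ (Fin N) → ℝ}

lemma fluxIntegrable_const (hn : ‖n‖ = 1) (c : ℝ) : FluxIntegrable n fun _ => c := by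
  simpa only [FluxIntegrable, mul_assoc] using
    (integrable_comp_inner_mul_gaussM hn integrable_max_mul_gaussianPDFReal).const_mul c

lemma FluxIntegrable.add (hf : FluxIntegrable n f) (hg : FluxIntegrable n g) :
    FluxIntegrable n fun v => f v + g v := by
  simp only [FluxIntegrable, add_mul]
  exact Integrable.add hf hg

lemma FluxIntegrable.sub (hf : FluxIntegrable n f) (hg : FluxIntegrable n g) :
    FluxIntegrable n fun v => f v - g v := by
  simp only [FluxIntegrable, sub_mul]
  exact Integrable.sub hf hg

lemma FluxIntegrable.const_mul (hf : FluxIntegrable n f) (c : ℝ) :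
    FluxIntegrable n fun v => c * f v := by
  simpa only [FluxIntegrable, mul_assoc] using Integrable.const_mul hf c

lemma Lam_add (hf : FluxIntegrable n f) (hg : FluxIntegrable n g) :
    Lam n (fun v => f v + g v) = Lam n f + Lam n g := by
  simp only [Lam, add_mul, integral_add hf hg, mul_add]

lemma Lam_sub (hf : FluxIntegrable n f) (hg : FluxIntegrable n g) :
    Lam n (fun v => f v - g v) = Lam n f - Lam n g := by
  simp only [Lam, sub_mul, integral_sub hf hg, mul_sub]

lemma Lam_const_mul (c : ℝ) (f : EuclideanSpace ℝ (Fin N) → ℝ) :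
    Lam n (fun v => c * f v) = c * Lam n f := by
  simp only [Lam, mul_assoc, integral_const_mul]
  ring

lemma Lam_const (hn : ‖n‖ = 1) (c : ℝ) : Lam n (fun _ => c) = c := by
  simp only [Lam, mul_assoc, integral_const_mul,
    integral_comp_inner_mul_gaussM hn (fun t => max t 0), integral_max_mul_gaussianPDFReal]
  field_simp

lemma fluxIntegrable_mul_entH_div_sub_one (hn : ‖n‖ = 1) (hg : FluxIntegrable n g)
    (hhg : FluxIntegrable n fun v => entH (g v - 1)) {c : ℝ} (hc : c ≠ 0) :
    FluxIntegrable n fun v => c * entH (g v / c - 1) := by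
  simp only [mul_entH_div_sub_one hc]
  exact (hhg.sub (hg.const_mul _)).add (fluxIntegrable_const hn _)

lemma Lam_mul_entH_div_sub_one (hn : ‖n‖ = 1) (hg : FluxIntegrable n g)
    (hhg : FluxIntegrable n fun v => entH (g v - 1)) {c : ℝ} (hc : c ≠ 0) :
    Lam n (fun v => c * entH (g v / c - 1)) =
      Lam n (fun v => entH (g v - 1)) - log c * Lam n g + (c - 1) := by
  simp only [mul_entH_div_sub_one hc]
  rw [Lam_add (hhg.sub (hg.const_mul _)) (fluxIntegrable_const hn _),
    Lam_sub hhg (hg.const_mul _), Lam_const_mul, Lam_const hn]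

end Lam

lemma mul_ite_lt_abs_mul_min_sq_le {η z p c m : ℝ} (hη0 : 0 < η) (hη1 : η ≤ 1) (hz : -1 ≤ z)
    (hp : 0 ≤ p) (hcm : 0 ≤ c * m) :
    c * ((if η < |z| then 1 else 0) * min (p ^ 2) 1 * m) ≤ (entH η)⁻¹ * (c * entH z * p * m) := by
  have hηpos := entH_pos hη0
  have hchebyshev : (if η < |z| then 1 else 0) * min (p ^ 2) 1 ≤ entH z / entH η * p := by
    split_ifs with h
    · have hmin : min (p ^ 2) 1 ≤ p := by
        rcases le_total p 1 with hp1 | hp1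
        · exact (min_le_left _ _).trans (by nlinarith)
        · exact (min_le_right _ _).trans hp1
      have hratio : 1 ≤ entH z / entH η :=
        (one_le_div hηpos).2 (entH_le_of_le_abs hη0.le hη1 hz h.le)
      nlinarith
    · rw [zero_mul]
      exact mul_nonneg (div_nonneg (entH_nonneg hz) hηpos.le) hp
  calc _ = c * m * ((if η < |z| then 1 else 0) * min (p ^ 2) 1) := by ring
    _ ≤ c * m * (entH z / entH η * p) := mul_le_mul_of_nonneg_left hchebyshev hcm
    _ = _ := by ring

theorem large_deviation_part_of_mass_flux_general {N : ℕ}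
    (n : EuclideanSpace ℝ (Fin N)) (hn : ‖n‖ = 1)
    (η : ℝ) (hη : η ∈ Set.Ioo (0 : ℝ) 1)
    (G : EuclideanSpace ℝ (Fin N) → ℝ)
    (hGnonneg : ∀ v, 0 ≤ G v)
    (hGint : Integrable fun v => G v * max ⟪v, n⟫ 0 * gaussM v)
    (hhGint : Integrable fun v => entH (G v - 1) * max ⟪v, n⟫ 0 * gaussM v)
    (hGpos : 0 < Lam n G) :
    Lam n G *
        ∫ v, (if η < |G v / Lam n G - 1| then (1 : ℝ) else 0) *
          min ((max ⟪v, n⟫ 0) ^ 2) 1 * gaussM v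
      ≤ (1 / (Real.sqrt (2 * π) * entH η)) *
          (Lam n (fun v => entH (G v - 1)) - entH (Lam n G - 1)) := by
  set c := Lam n G
  have hz : ∀ v, -1 ≤ G v / c - 1 := fun v => by
    linarith [div_nonneg (hGnonneg v) hGpos.le]
  calc c * ∫ v, (if η < |G v / c - 1| then (1 : ℝ) else 0) *
          min ((max ⟪v, n⟫ 0) ^ 2) 1 * gaussM v
      = ∫ v, c * ((if η < |G v / c - 1| then (1 : ℝ) else 0) *
          min ((max ⟪v, n⟫ 0) ^ 2) 1 * gaussM v) := (integral_const_mul _ _).symm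
    _ ≤ ∫ v, (entH η)⁻¹ * (c * entH (G v / c - 1) * max ⟪v, n⟫ 0 * gaussM v) :=
        integral_mono_of_nonneg (ae_of_all _ fun v => by have := gaussM_nonneg v; positivity)
          (Integrable.const_mul (fluxIntegrable_mul_entH_div_sub_one hn hGint hhGint hGpos.ne') _)
          (ae_of_all _ fun v => mul_ite_lt_abs_mul_min_sq_le hη.1 hη.2.le (hz v)
            (le_max_right _ _) (mul_nonneg hGpos.le (gaussM_nonneg v)))
    _ = (entH η)⁻¹ * (√(2 * π))⁻¹ * Lam n (fun v => c * entH (G v / c - 1)) := by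
        rw [integral_const_mul, Lam]
        field_simp
    _ = _ := by
        rw [Lam_mul_entH_div_sub_one hn hGint hhGint hGpos.ne', entH_sub_one]
        field_simp
        ring

/-- Estimate of the large-deviation part of the outgoing mass flux by the
Darrozes-Guiraud information:
`Λ_n(G) ∫ 1_{|G/Λ_n(G) − 1| > η} min((v·n)₊², 1) M dv
  ≤ (1/(√(2π) h(η))) (Λ_n(h(G−1)) − h(Λ_n(G) − 1))`. -/
theorem large_deviation_part_of_mass_flux {N : ℕ}
    (n : EuclideanSpace ℝ (Fin N)) (hn : ‖n‖ = 1)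
    (η : ℝ) (hη : η ∈ Set.Ioo (0 : ℝ) 1)
    (G : EuclideanSpace ℝ (Fin N) → ℝ) (hGmeas : Measurable G)
    (hGnonneg : ∀ v, 0 ≤ G v)
    (hGint : Integrable fun v => G v * max ⟪v, n⟫ 0 * gaussM v)
    (hhGint : Integrable fun v => entH (G v - 1) * max ⟪v, n⟫ 0 * gaussM v)
    (hGpos : 0 < Lam n G) :
    Lam n G *
        ∫ v, (if η < |G v / Lam n G - 1| then (1 : ℝ) else 0) *
          min ((max ⟪v, n⟫ 0) ^ 2) 1 * gaussM v
      ≤ (1 / (Real.sqrt (2 * π) * entH η)) *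
          (Lam n (fun v => entH (G v - 1)) - entH (Lam n G - 1)) :=
  large_deviation_part_of_mass_flux_general n hn η hη G hGnonneg hGint hhGint hGpos
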